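/- A formula φ is valid in the internal logic of the topos of trees (i.e., forced at every positive integer under every ω-valuation in the ω-semantics) if and only if φ is LC⊳-valid (forced at every world of every LC⊳-model). -/

import Mathlib

/-- Formulas: atoms, ⊤, ⊥, ∧, ∨, →, irreflexive implication ⊳ (`iimp`), later ▷ (`later`). -/
inductive Fm : Type where
  | atom : ℕ → Fm
  | top : Fm
  | bot : Fm
  | and : Fm → Fm → Fm
  | or : Fm → Fm → Fm
  | imp : Fm → Fm → Fm
  | iimp : Fm → Fm → Fm
  | later : Fm → Fm
deriving DecidableEq

/-- A KM-model: nonempty set of worlds, transitive converse-well-founded relation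
(no infinite ascending chain), persistent valuation of atoms. -/
structure KMModel where
  W : Type
  nonempty : Nonempty W
  R : W → W → Prop
  trans : ∀ {x y z}, R x y → R y z → R x z
  cwf : ¬ ∃ f : ℕ → W, ∀ n, R (f n) (f (n + 1))
  val : ℕ → W → Prop
  persist : ∀ p {w x}, val p w → R w x → val p x

/-- Kripke forcing in a KM-model. -/
def KMModel.force (M : KMModel) : Fm → M.W → Prop
  | .atom p, w => M.val p w
  | .top, _ => True
  | .bot, _ => False
  | .and a b, w => M.force a w ∧ M.force b w
  | .or a b, w => M.force a w ∨ M.force b w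
  | .imp a b, w => ∀ x, (w = x ∨ M.R w x) → M.force a x → M.force b x
  | .iimp a b, w => ∀ x, M.R w x → M.force a x → M.force b x
  | .later a, w => ∀ x, M.R w x → M.force a x

/-- An LC⊳-model is a KM-model whose relation is moreover connected. -/
structure LCModel extends KMModel where
  conn : ∀ x y : W, x = y ∨ R x y ∨ R y x

/-- KM-validity. -/
def KMValid (φ : Fm) : Prop :=
  ∀ (M : KMModel) (w : M.W), M.force φ w

/-- LC⊳-validity. -/
def LCValid (φ : Fm) : Prop :=
  ∀ (M : LCModel) (w : M.W), M.toKMModel.force φ w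

/-- ω-semantics forcing (worlds are positive integers). -/
def wforce (η : ℕ → ℕ+ → Prop) : Fm → ℕ+ → Prop
  | .atom p, j => η p j
  | .top, _ => True
  | .bot, _ => False
  | .and a b, j => wforce η a j ∧ wforce η b j
  | .or a b, j => wforce η a j ∨ wforce η b j
  | .imp a b, j => ∀ k ≤ j, wforce η a k → wforce η b k
  | .iimp a b, j => ∀ k < j, wforce η a k → wforce η b k
  | .later a, j => ∀ k < j, wforce η a k

/-- `iimps G` is the set {γ ⊳ γ' | (γ,γ') ∈ G}. -/
def iimps (G : Finset (Fm × Fm)) : Finset Fm := G.image fun p => Fm.iimp p.1 p.2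

/-- `impsOf G` is the set {γ → γ' | (γ,γ') ∈ G}. -/
def impsOf (G : Finset (Fm × Fm)) : Finset Fm := G.image fun p => Fm.imp p.1 p.2

/-- `laters Θ` is the set {▷θ | θ ∈ Θ}. -/
def laters (Θ : Finset Fm) : Finset Fm := Θ.image Fm.later

def Fm.isAtom : Fm → Prop
  | .atom _ => True
  | _ => False

/-- The sequent calculus SC_LC⊳ on sequents of finite sets of formulas. -/
inductive DerivLC : Finset Fm → Finset Fm → Prop where
  | topR (Γ Δ) : DerivLC Γ (insert Fm.top Δ)
  | botL (Γ Δ) : DerivLC (insert Fm.bot Γ) Δ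
  | id (Γ Δ φ) : DerivLC (insert φ Γ) (insert φ Δ)
  | andL (Γ Δ φ ψ) : DerivLC (insert φ (insert ψ Γ)) Δ → DerivLC (insert (φ.and ψ) Γ) Δ
  | andR (Γ Δ φ ψ) : DerivLC Γ (insert φ Δ) → DerivLC Γ (insert ψ Δ) →
      DerivLC Γ (insert (φ.and ψ) Δ)
  | orL (Γ Δ φ ψ) : DerivLC (insert φ Γ) Δ → DerivLC (insert ψ Γ) Δ →
      DerivLC (insert (φ.or ψ) Γ) Δ
  | orR (Γ Δ φ ψ) : DerivLC Γ (insert φ (insert ψ Δ)) → DerivLC Γ (insert (φ.or ψ) Δ)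
  | impL (Γ Δ φ ψ) : DerivLC (insert (φ.iimp ψ) Γ) (insert φ Δ) →
      DerivLC (insert ψ (insert (φ.iimp ψ) Γ)) Δ →
      DerivLC (insert (φ.imp ψ) Γ) Δ
  | impR (Γ Δ φ ψ) : DerivLC (insert φ Γ) (insert ψ Δ) → DerivLC Γ (insert (φ.iimp ψ) Δ) →
      DerivLC Γ (insert (φ.imp ψ) Δ)
  | step (Sl Sr Θ Φ : Finset Fm) (G D : Finset (Fm × Fm)) :
      (∀ a ∈ Sl, a.isAtom) → (∀ a ∈ Sr, a.isAtom) →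
      Sl ∩ Sr = ∅ → Fm.bot ∉ Sl → Fm.top ∉ Sr →
      (D.Nonempty ∨ Φ.Nonempty) →
      (∀ pq ∈ D, DerivLC
          (Sl ∪ impsOf G ∪ Θ ∪ laters Θ ∪ ({Fm.iimp pq.1 pq.2, pq.1} : Finset Fm))
          (insert pq.2 ((impsOf D).erase (Fm.imp pq.1 pq.2) ∪ Φ))) →
      (∀ χ ∈ Φ, DerivLC
          (Sl ∪ Θ ∪ laters Θ ∪ impsOf G ∪ ({Fm.later χ} : Finset Fm))
          (impsOf D ∪ Φ)) →
      DerivLC (Sl ∪ laters Θ ∪ iimps G) (iimps D ∪ laters Φ ∪ Sr)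

/-- The sequent calculus SC_KM: same static rules, transitional rules (⊳R) and (▷R). -/
inductive DerivKM : Finset Fm → Finset Fm → Prop where
  | topR (Γ Δ) : DerivKM Γ (insert Fm.top Δ)
  | botL (Γ Δ) : DerivKM (insert Fm.bot Γ) Δ
  | id (Γ Δ φ) : DerivKM (insert φ Γ) (insert φ Δ)
  | andL (Γ Δ φ ψ) : DerivKM (insert φ (insert ψ Γ)) Δ → DerivKM (insert (φ.and ψ) Γ) Δ
  | andR (Γ Δ φ ψ) : DerivKM Γ (insert φ Δ) → DerivKM Γ (insert ψ Δ) →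
      DerivKM Γ (insert (φ.and ψ) Δ)
  | orL (Γ Δ φ ψ) : DerivKM (insert φ Γ) Δ → DerivKM (insert ψ Γ) Δ →
      DerivKM (insert (φ.or ψ) Γ) Δ
  | orR (Γ Δ φ ψ) : DerivKM Γ (insert φ (insert ψ Δ)) → DerivKM Γ (insert (φ.or ψ) Δ)
  | impL (Γ Δ φ ψ) : DerivKM (insert (φ.iimp ψ) Γ) (insert φ Δ) →
      DerivKM (insert ψ (insert (φ.iimp ψ) Γ)) Δ →
      DerivKM (insert (φ.imp ψ) Γ) Δ
  | impR (Γ Δ φ ψ) : DerivKM (insert φ Γ) (insert ψ Δ) → DerivKM Γ (insert (φ.iimp ψ) Δ) →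
      DerivKM Γ (insert (φ.imp ψ) Δ)
  | iimpR (Sl Sr Θ Φ : Finset Fm) (G D : Finset (Fm × Fm)) (φ ψ : Fm) :
      (∀ a ∈ Sl, a.isAtom) → (∀ a ∈ Sr, a.isAtom) →
      Sl ∩ Sr = ∅ → Fm.bot ∉ Sl → Fm.top ∉ Sr →
      DerivKM (Sl ∪ Θ ∪ laters Θ ∪ impsOf G ∪ ({Fm.iimp φ ψ, φ} : Finset Fm)) {ψ} →
      DerivKM (Sl ∪ laters Θ ∪ iimps G) (insert (Fm.iimp φ ψ) (iimps D ∪ laters Φ ∪ Sr))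
  | laterR (Sl Sr Θ Φ : Finset Fm) (G D : Finset (Fm × Fm)) (φ : Fm) :
      (∀ a ∈ Sl, a.isAtom) → (∀ a ∈ Sr, a.isAtom) →
      Sl ∩ Sr = ∅ → Fm.bot ∉ Sl → Fm.top ∉ Sr →
      DerivKM (Sl ∪ Θ ∪ laters Θ ∪ impsOf G ∪ ({Fm.later φ} : Finset Fm)) {φ} →
      DerivKM (Sl ∪ laters Θ ∪ iimps G) (insert (Fm.later φ) (iimps D ∪ laters Φ ∪ Sr))

/-- A sequent is refutable (over LC⊳-models) if some world of some LC⊳-model forces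
every antecedent formula and no succedent formula. -/
def RefutableLC (Γ Δ : Finset Fm) : Prop :=
  ∃ (M : LCModel) (w : M.W),
    (∀ γ ∈ Γ, M.toKMModel.force γ w) ∧ ∀ δ ∈ Δ, ¬ M.toKMModel.force δ w

/-- A sequent is refutable (over KM-models) if some world of some KM-model forces
every antecedent formula and no succedent formula. -/
def RefutableKM (Γ Δ : Finset Fm) : Prop :=
  ∃ (M : KMModel) (w : M.W),
    (∀ γ ∈ Γ, M.force γ w) ∧ ∀ δ ∈ Δ, ¬ M.force δ w

/-- Length of a formula: number of symbol occurrences. -/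
def Fm.len : Fm → ℕ
  | .atom _ => 1
  | .top => 1
  | .bot => 1
  | .and a b => a.len + b.len + 1
  | .or a b => a.len + b.len + 1
  | .imp a b => a.len + b.len + 1
  | .iimp a b => a.len + b.len + 1
  | .later a => a.len + 1

/-- An explicit numeric code for formulas. -/
def Fm.code : Fm → ℕ
  | .atom p => Nat.pair 0 p
  | .top => Nat.pair 1 0
  | .bot => Nat.pair 2 0
  | .and a b => Nat.pair 3 (Nat.pair a.code b.code)
  | .or a b => Nat.pair 4 (Nat.pair a.code b.code)
  | .imp a b => Nat.pair 5 (Nat.pair a.code b.code)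
  | .iimp a b => Nat.pair 6 (Nat.pair a.code b.code)
  | .later a => Nat.pair 7 a.code

/-- Formulas with no ⊳ and no ▷. -/
def Fm.noModal : Fm → Prop
  | .atom _ => True
  | .top => True
  | .bot => True
  | .and a b => a.noModal ∧ b.noModal
  | .or a b => a.noModal ∧ b.noModal
  | .imp a b => a.noModal ∧ b.noModal
  | .iimp _ _ => False
  | .later _ => False

/-- Classical Boolean evaluation (junk values on the modal connectives). -/
def Fm.beval (v : ℕ → Bool) : Fm → Bool
  | .atom p => v p
  | .top => true
  | .bot => false
  | .and a b => a.beval v && b.beval v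
  | .or a b => a.beval v || b.beval v
  | .imp a b => !(a.beval v) || b.beval v
  | .iimp _ _ => false
  | .later _ => false

/-!
An ω-valuation is the same thing as an LC⊳-model on the chain `(ℕ+, >)`, so LC⊳-validity implies
validity in the topos of trees. Conversely, let `w` be a world of an LC⊳-model and `S` the
subformulas of `φ`. The `S`-theories of the worlds above `w` form a finite chain
`t₁ ⊋ t₂ ⊋ ⋯ ⊋ tₙ = Th w`. Picking in each class an `R`-maximal representative `f k` (possible by
converse well-foundedness) yields a finite tower in which every `R`-successor of `f j` has the
theory of some `f k` with `k < j`; this is exactly what is needed for the valuation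
`η p j := f (min j n) ⊩ p` to force a formula of `S` at `j ≤ n` iff `f j` forces it.
-/

namespace Fm

def subformulas : Fm → Finset Fm
  | .atom p => {.atom p}
  | .top => {.top}
  | .bot => {.bot}
  | .and a b => insert (.and a b) (a.subformulas ∪ b.subformulas)
  | .or a b => insert (.or a b) (a.subformulas ∪ b.subformulas)
  | .imp a b => insert (.imp a b) (a.subformulas ∪ b.subformulas)
  | .iimp a b => insert (.iimp a b) (a.subformulas ∪ b.subformulas)
  | .later a => insert (.later a) a.subformulas

theorem mem_subformulas_self (ψ : Fm) : ψ ∈ ψ.subformulas := by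
  cases ψ <;> simp [subformulas]

end Fm

namespace KMModel

variable (M : KMModel)

theorem force_of_rel {x y : M.W} (h : M.R x y) : ∀ {ψ : Fm}, M.force ψ x → M.force ψ y
  | .atom p, hx => M.persist p hx h
  | .top, _ => trivial
  | .bot, hx => hx
  | .and _ _, hx => ⟨force_of_rel h hx.1, force_of_rel h hx.2⟩
  | .or _ _, hx => hx.imp (force_of_rel h) (force_of_rel h)
  | .imp _ _, hx => by
      rintro z (rfl | hz)
      exacts [hx _ (Or.inr h), hx z (Or.inr (M.trans h hz))]
  | .iimp _ _, hx => fun z hz => hx z (M.trans h hz)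
  | .later _, hx => fun z hz => hx z (M.trans h hz)

theorem wellFounded_flip_R : WellFounded (flip M.R) :=
  wellFounded_iff_isEmpty_descending_chain.2 ⟨fun ⟨f, hf⟩ => M.cwf ⟨f, hf⟩⟩

open Classical in
noncomputable def theory (S : Finset Fm) (x : M.W) : Finset Fm := {ψ ∈ S | M.force ψ x}

variable {M} {S : Finset Fm}

theorem mem_theory {ψ : Fm} {x : M.W} : ψ ∈ M.theory S x ↔ ψ ∈ S ∧ M.force ψ x := by
  classical
  simp [theory]

theorem theory_subset (x : M.W) : M.theory S x ⊆ S := fun _ h => (mem_theory.1 h).1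

theorem theory_mono {x y : M.W} (h : M.R x y) : M.theory S x ⊆ M.theory S y := fun _ hψ =>
  mem_theory.2 ⟨(mem_theory.1 hψ).1, M.force_of_rel h (mem_theory.1 hψ).2⟩

theorem force_iff_of_theory_eq {x y : M.W} (h : M.theory S x = M.theory S y) {ψ : Fm}
    (hψ : ψ ∈ S) : M.force ψ x ↔ M.force ψ y := by
  simpa [mem_theory, hψ] using congrArg (ψ ∈ ·) h

theorem force_imp_of_theory_eq {a b : Fm} (ha : a ∈ S) (hb : b ∈ S) (x y : M.W)
    (h : M.theory S x = M.theory S y) :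
    (M.force a x → M.force b x) → M.force a y → M.force b y := by
  rw [force_iff_of_theory_eq h ha, force_iff_of_theory_eq h hb]
  exact id

variable (M S) in
def IsTheoryMaximal (y : M.W) : Prop := ∀ x, M.R y x → M.theory S x ≠ M.theory S y

theorem exists_isTheoryMaximal (x : M.W) :
    ∃ y, (x = y ∨ M.R x y) ∧ M.theory S y = M.theory S x ∧ M.IsTheoryMaximal S y := by
  obtain ⟨y, ⟨hxy, hth⟩, hmax⟩ := M.wellFounded_flip_R.has_min
    {u | (x = u ∨ M.R x u) ∧ M.theory S u = M.theory S x} ⟨x, Or.inl rfl, rfl⟩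
  refine ⟨y, hxy, hth, fun u hyu hu => hmax u ⟨?_, hu.trans hth⟩ hyu⟩
  rcases hxy with rfl | hxy
  exacts [Or.inr hyu, Or.inr (M.trans hxy hyu)]

variable (M S) in
structure IsTower (f : ℕ+ → M.W) (n : ℕ+) : Prop where
  rel : ∀ ⦃k j⦄, k < j → j ≤ n → M.R (f j) (f k)
  back : ∀ ⦃j⦄, j ≤ n → ∀ x, M.R (f j) x → ∃ k < j, M.theory S x = M.theory S (f k)

variable (M) in
def towerValuation (f : ℕ+ → M.W) (n : ℕ+) (p : ℕ) (j : ℕ+) : Prop := M.val p (f (min j n))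

namespace IsTower

variable {f : ℕ+ → M.W} {n : ℕ+}

theorem eq_or_rel (hf : M.IsTower S f n) {k j : ℕ+} (hkj : k ≤ j) (hj : j ≤ n) :
    f j = f k ∨ M.R (f j) (f k) := by
  rcases hkj.eq_or_lt with rfl | hlt
  exacts [Or.inl rfl, Or.inr (hf.rel hlt hj)]

theorem forall_rel_iff (hf : M.IsTower S f n) {j : ℕ+} (hj : j ≤ n) {P : M.W → Prop}
    (hP : ∀ x y, M.theory S x = M.theory S y → P x → P y) :
    (∀ x, M.R (f j) x → P x) ↔ ∀ k < j, P (f k) := by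
  refine ⟨fun h k hk => h _ (hf.rel hk hj), fun h x hx => ?_⟩
  obtain ⟨k, hk, hxk⟩ := hf.back hj x hx
  exact hP _ _ hxk.symm (h k hk)

theorem forall_eq_or_rel_iff (hf : M.IsTower S f n) {j : ℕ+} (hj : j ≤ n) {P : M.W → Prop}
    (hP : ∀ x y, M.theory S x = M.theory S y → P x → P y) :
    (∀ x, f j = x ∨ M.R (f j) x → P x) ↔ ∀ k ≤ j, P (f k) := by
  simp only [or_imp, forall_and, forall_eq', hf.forall_rel_iff hj hP, le_iff_eq_or_lt,
    forall_eq]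

theorem extend (hf : M.IsTower S f n) {y : M.W} (hy : M.R y (f n))
    (hback : ∀ x, M.R y x → ∃ k ≤ n, M.theory S x = M.theory S (f k)) :
    M.IsTower S (fun k => if k ≤ n then f k else y) (n + 1) := by
  have rel_y : ∀ k ≤ n, M.R y (f k) := fun k hk =>
    (hf.eq_or_rel hk le_rfl).elim (fun h => h ▸ hy) (M.trans hy)
  constructor
  · intro k j hkj hj
    by_cases hjn : j ≤ n
    · simpa [hjn, hkj.le.trans hjn] using hf.rel hkj hjn
    · simpa [hjn, PNat.lt_add_one_iff.1 (hkj.trans_le hj)] using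
        rel_y k (PNat.lt_add_one_iff.1 (hkj.trans_le hj))
  · intro j hj x hx
    by_cases hjn : j ≤ n
    · simp only [hjn, if_true] at hx
      obtain ⟨k, hkj, hxk⟩ := hf.back hjn x hx
      exact ⟨k, hkj, by simpa [hkj.le.trans hjn] using hxk⟩
    · simp only [hjn, if_false] at hx
      obtain ⟨k, hkn, hxk⟩ := hback x hx
      exact ⟨k, hkn.trans_lt (not_le.1 hjn), by simpa [hkn] using hxk⟩

theorem towerValuation_antitone (hf : M.IsTower S f n) (p : ℕ) (j k : ℕ+) (hkj : k ≤ j)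
    (hp : M.towerValuation f n p j) : M.towerValuation f n p k := by
  unfold towerValuation at *
  rcases hf.eq_or_rel (min_le_min_right n hkj) (min_le_right j n) with h | h
  exacts [h ▸ hp, M.persist p hp h]

theorem wforce_towerValuation_iff (hf : M.IsTower S f n) {ψ : Fm} (hψ : ψ.subformulas ⊆ S)
    {j : ℕ+} (hj : j ≤ n) : wforce (M.towerValuation f n) ψ j ↔ M.force ψ (f j) := by
  induction ψ generalizing j with
  | atom p => simp [wforce, force, towerValuation, min_eq_left hj]
  | top | bot => rfl
  | and a b iha ihb =>
    simp only [Fm.subformulas, Finset.insert_subset_iff, Finset.union_subset_iff] at hψ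
    exact and_congr (iha hψ.2.1 hj) (ihb hψ.2.2 hj)
  | or a b iha ihb =>
    simp only [Fm.subformulas, Finset.insert_subset_iff, Finset.union_subset_iff] at hψ
    exact or_congr (iha hψ.2.1 hj) (ihb hψ.2.2 hj)
  | imp a b iha ihb =>
    simp only [Fm.subformulas, Finset.insert_subset_iff, Finset.union_subset_iff] at hψ
    obtain ⟨-, ha, hb⟩ := hψ
    have hP := force_imp_of_theory_eq (M := M) (ha a.mem_subformulas_self) (hb b.mem_subformulas_self)
    rw [wforce, force, hf.forall_eq_or_rel_iff hj hP]
    exact forall₂_congr fun k hk => imp_congr (iha ha (hk.trans hj)) (ihb hb (hk.trans hj))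
  | iimp a b iha ihb =>
    simp only [Fm.subformulas, Finset.insert_subset_iff, Finset.union_subset_iff] at hψ
    obtain ⟨-, ha, hb⟩ := hψ
    have hP := force_imp_of_theory_eq (M := M) (ha a.mem_subformulas_self) (hb b.mem_subformulas_self)
    rw [wforce, force, hf.forall_rel_iff hj hP]
    exact forall₂_congr fun k hk =>
      imp_congr (iha ha (hk.le.trans hj)) (ihb hb (hk.le.trans hj))
  | later a iha =>
    simp only [Fm.subformulas, Finset.insert_subset_iff] at hψ
    rw [wforce, force, hf.forall_rel_iff hj fun x y h => (force_iff_of_theory_eq h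
      (hψ.2 a.mem_subformulas_self)).1]
    exact forall₂_congr fun k hk => iha hψ.2 (hk.le.trans hj)

end IsTower

end KMModel

namespace LCModel

variable (M : LCModel) {S : Finset Fm}

theorem exists_isTower {y : M.W} (hy : M.IsTheoryMaximal S y) :
    ∃ f n, M.IsTower S f n ∧ f n = y := by
  induction hm : S.card - (M.theory S y).card using Nat.strong_induction_on generalizing y with
  | _ m ih =>
  by_cases hsucc : ∃ x, M.R y x
  swap
  · simp only [not_exists] at hsucc
    refine ⟨fun _ => y, 1, ⟨fun k j hkj hj => ?_, fun j _ x hx => (hsucc x hx).elim⟩, rfl⟩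
    exact absurd (hkj.trans_le hj) (not_lt_of_ge one_le)
  -- among the successors of `y`, `x₀` has the least theory, and `z` is a last world with it
  obtain ⟨_, ⟨x₀, hyx₀, rfl⟩, hx₀min⟩ := wellFounded_lt.has_min (M.theory S '' {x | M.R y x})
    (by obtain ⟨x, hx⟩ := hsucc; exact ⟨_, x, hx, rfl⟩)
  obtain ⟨z, hx₀z, hz, hzmax⟩ := M.exists_isTheoryMaximal (S := S) x₀
  have hyz : M.R y z := hx₀z.elim (· ▸ hyx₀) (M.trans hyx₀)
  have hlt : M.theory S y ⊂ M.theory S z :=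
    Finset.ssubset_iff_subset_ne.2 ⟨KMModel.theory_mono hyz, (hy z hyz).symm⟩
  have hcard : S.card - (M.theory S z).card < m := by
    have := Finset.card_lt_card hlt
    have := Finset.card_le_card (KMModel.theory_subset (S := S) z)
    omega
  obtain ⟨f, n, hf, rfl⟩ := ih _ hcard hzmax rfl
  refine ⟨_, n + 1, hf.extend hyz fun x hx => ?_, by simp⟩
  rcases M.conn (f n) x with rfl | h | h
  · exact ⟨n, le_rfl, rfl⟩
  · obtain ⟨k, hk, hxk⟩ := hf.back le_rfl x h
    exact ⟨k, hk.le, hxk⟩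
  · refine ⟨n, le_rfl, eq_of_le_of_not_lt (KMModel.theory_mono h) ?_⟩
    rw [hz]
    exact hx₀min _ ⟨x, hx, rfl⟩

end LCModel

def omegaModel (η : ℕ → ℕ+ → Prop) (hη : ∀ p (j k : ℕ+), k ≤ j → η p j → η p k) : LCModel where
  W := ℕ+
  nonempty := ⟨1⟩
  R j k := k < j
  trans h₁ h₂ := h₂.trans h₁
  cwf := fun ⟨f, hf⟩ =>
    (WellFounded.not_rel_apply_succ (r := (· < ·)) f).elim fun n hn => hn (hf n)
  val := η
  persist p _ _ hj hk := hη p _ _ hk.le hj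
  conn j k := by
    rcases lt_trichotomy j k with h | h | h
    exacts [Or.inr (Or.inr h), Or.inl h, Or.inr (Or.inl h)]

theorem omegaModel_force_iff {η : ℕ → ℕ+ → Prop} (hη : ∀ p (j k : ℕ+), k ≤ j → η p j → η p k)
    (ψ : Fm) (j : ℕ+) : (omegaModel η hη).force ψ j ↔ wforce η ψ j := by
  induction ψ generalizing j with
  | atom | top | bot => rfl
  | and a b iha ihb => exact and_congr (iha j) (ihb j)
  | or a b iha ihb => exact or_congr (iha j) (ihb j)
  | imp a b iha ihb =>
    refine forall_congr' fun (k : ℕ+) => imp_congr ?_ (imp_congr (iha k) (ihb k))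
    exact eq_comm.or Iff.rfl |>.trans (le_iff_eq_or_lt (a := k) (b := j)).symm
  | iimp a b iha ihb => exact forall₂_congr fun k _ => imp_congr (iha k) (ihb k)
  | later a iha => exact forall₂_congr fun k _ => iha k

/-- internal validity in the topos of trees coincides with LC⊳-validity. -/
theorem topos_of_trees_iff_LC (φ : Fm) :
    (∀ η : ℕ → ℕ+ → Prop,
        (∀ p (j k : ℕ+), k ≤ j → η p j → η p k) → ∀ j : ℕ+, wforce η φ j)
      ↔ LCValid φ := by
  refine ⟨fun h M w => ?_, fun h η hη j => ?_⟩
  swap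
  · exact (omegaModel_force_iff hη φ j).1 (h (omegaModel η hη) j)
  obtain ⟨y, -, hyw, hy⟩ := M.exists_isTheoryMaximal (S := φ.subformulas) w
  obtain ⟨f, n, hf, rfl⟩ := M.exists_isTower hy
  have hφ := h _ hf.towerValuation_antitone n
  rw [hf.wforce_towerValuation_iff subset_rfl le_rfl] at hφ
  exact (KMModel.force_iff_of_theory_eq hyw φ.mem_subformulas_self).1 hφ
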